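/- arXiv:2408.04832 — 6 statements merged into one kernel-verified Lean document; each statement's English description precedes it below -/
import Mathlib

section
/- Let G=(V,C,S,T) be a flow graph with symmetric nonnegative capacities C, sources S and sinks T. Given a leaky flow w̃ (a nonnegative function on V×V satisfying the capacity constraints w̃(u,v)+w̃(v,u) ≤ C(u,v) for all u,v, but not necessarily flow conservation), there exists a feasible flow w of G such that val(w) ≥ val(w̃) − Σ_{v ∈ V∖(S∪T)} |leak_{w̃}(v)|, where leak_{w̃}(v) = inflow(v) − outflow(v) and val is the net outflow from the sources. -/
/-!
Among the flows that are bounded edgewise by `wt` and conserve flow at the inner vertices (a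
compact set) take one, `w`, of maximal value. No sink is reachable from a source in the residual
network `wt - w`: pushing flow along such a path would increase the value. Let `A` be the set of
vertices reachable from the sources. No residual capacity leaves `A`, so the net outflow of
`wt - w` out of `A` is nonpositive; since `w` is conservative on `A \ S`, this reads
`val wt + ∑ v ∈ A \ S, netOutflow wt v ≤ val w`, and `A \ S` consists of inner vertices.
-/

open Finset

/-- A flow `w` on a flow graph with capacities `C`, sources `S` and sinks `T` is feasible if it
is nonnegative, respects the capacity constraints, and conserves flow at every non-terminal
vertex. -/
def IsFeasibleFlow {V : Type*} [Fintype V] (C : V → V → ℝ) (S T : Finset V)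
    (w : V → V → ℝ) : Prop :=
  (∀ u v, 0 ≤ w u v) ∧ (∀ u v, w u v + w v u ≤ C u v) ∧
    ∀ v, v ∉ S → v ∉ T → (∑ u, w v u) = (∑ u, w u v)

/-- The value of a flow: net outflow from the sources. -/
def flowVal {V : Type*} [Fintype V] (S : Finset V) (w : V → V → ℝ) : ℝ :=
  ∑ s ∈ S, ((∑ u, w s u) - ∑ u, w u s)

open Relation

section

variable {V : Type*} [Fintype V]

def netOutflow : (V → V → ℝ) →ₗ[ℝ] V → ℝ where
  toFun w v := ∑ u, w v u - ∑ u, w u v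
  map_add' w w' := by ext v; simp only [Pi.add_apply, sum_add_distrib]; ring
  map_smul' a w := by ext v; simp [mul_sum, mul_sub]

lemma netOutflow_apply (w : V → V → ℝ) (v : V) :
    netOutflow w v = ∑ u, w v u - ∑ u, w u v := rfl

lemma flowVal_eq_sum_netOutflow (S : Finset V) (w : V → V → ℝ) :
    flowVal S w = ∑ s ∈ S, netOutflow w s := rfl

lemma continuous_flowVal (S : Finset V) : Continuous (flowVal S : (V → V → ℝ) → ℝ) :=
  continuous_finsetSum S fun s _ =>
    (continuous_apply s).comp netOutflow.continuous_of_finiteDimensional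

lemma netOutflow_single [DecidableEq V] (b c : V) (δ : ℝ) :
    netOutflow (Pi.single b (Pi.single c δ)) = Pi.single b δ - Pi.single c δ := by
  ext v
  simp [netOutflow_apply, Pi.single_apply, ite_apply]

lemma sum_netOutflow_eq_sum_compl [DecidableEq V] (w : V → V → ℝ) (A : Finset V) :
    ∑ v ∈ A, netOutflow w v = ∑ v ∈ A, ∑ u ∈ Aᶜ, (w v u - w u v) := by
  have hinner : ∑ v ∈ A, ∑ u ∈ A, (w v u - w u v) = 0 := by
    simp only [sum_sub_distrib]
    rw [sum_comm, sub_self]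
  rw [← zero_add (∑ v ∈ A, ∑ u ∈ Aᶜ, _), ← hinner, ← sum_add_distrib]
  refine sum_congr rfl fun v _ => ?_
  rw [sum_add_sum_compl, sum_sub_distrib, netOutflow_apply]

lemma sum_netOutflow_nonpos [DecidableEq V] {d : V → V → ℝ} (hd : 0 ≤ d) {A : Finset V}
    (hA : ∀ v ∈ A, ∀ u ∉ A, d v u ≤ 0) : ∑ v ∈ A, netOutflow d v ≤ 0 := by
  rw [sum_netOutflow_eq_sum_compl]
  refine sum_nonpos fun v hv => sum_nonpos fun u hu => ?_
  have hdu : 0 ≤ d u v := hd u v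
  linarith [hA v hv u (mem_compl.1 hu)]

lemma exists_path_flow [DecidableEq V] {d : V → V → ℝ} (hd : 0 ≤ d) {a b : V}
    (h : ReflTransGen (fun u v => 0 < d u v) a b) :
    ∃ g, 0 ≤ g ∧ g ≤ d ∧ ∃ ε > 0, netOutflow g = Pi.single a ε - Pi.single b ε := by
  induction h with
  | refl => exact ⟨0, le_rfl, hd, 1, one_pos, by simp⟩
  | @tail b c _ hbc ih =>
    obtain ⟨g, hg0, hgd, ε, hε, hg⟩ := ih
    -- the walk may already use the edge `b → c`: scale `g` down to half of `d`, keeping the other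
    -- half for the new edge
    set δ := min ε (d b c) / 2 with hδ
    have hδ0 : 0 < δ := by positivity
    have hδε : δ / ε ≤ 1 / 2 := by
      rw [div_le_iff₀ hε]; linarith [min_le_left ε (d b c)]
    have hδd : δ ≤ d b c / 2 := by linarith [min_le_right ε (d b c)]
    have hscaled : ∀ u v, δ / ε * g u v ≤ d u v / 2 := fun u v => by
      nlinarith [mul_le_mul_of_nonneg_right hδε (hg0 u v), hgd u v]
    refine ⟨(δ / ε) • g + Pi.single b (Pi.single c δ), ?_, ?_, δ, hδ0, ?_⟩
    · exact add_nonneg (smul_nonneg (by positivity) hg0)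
        (Pi.single_nonneg.2 (Pi.single_nonneg.2 hδ0.le))
    · intro u v
      have hduv : 0 ≤ d u v := (hg0 u v).trans (hgd u v)
      simp only [Pi.add_apply, Pi.smul_apply, smul_eq_mul, Pi.single_apply, ite_apply,
        Pi.zero_apply]
      split_ifs with hu hv
      · subst hu hv; linarith [hscaled u v]
      all_goals linarith [hscaled u v]
    · rw [map_add, map_smul, hg, netOutflow_single]
      ext v
      simp only [Pi.add_apply, Pi.sub_apply, Pi.smul_apply, smul_eq_mul, Pi.single_apply]
      split_ifs <;> field_simp <;> ring

def flowsBelow (S T : Finset V) (c : V → V → ℝ) : Set (V → V → ℝ) :=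
  Set.Icc 0 c ∩ {w | ∀ v, v ∉ S → v ∉ T → netOutflow w v = 0}

lemma isCompact_flowsBelow (S T : Finset V) (c : V → V → ℝ) :
    IsCompact (flowsBelow S T c) := by
  refine isCompact_Icc.inter_right ?_
  simp only [Set.ofPred_forall]
  exact isClosed_iInter fun v => isClosed_iInter fun _ => isClosed_iInter fun _ =>
    isClosed_eq ((continuous_apply v).comp netOutflow.continuous_of_finiteDimensional)
      continuous_const

lemma exists_isMaxOn_flowVal (S T : Finset V) {c : V → V → ℝ} (hc : 0 ≤ c) :
    ∃ w ∈ flowsBelow S T c, IsMaxOn (flowVal S) (flowsBelow S T c) w :=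
  (isCompact_flowsBelow S T c).exists_isMaxOn ⟨0, ⟨le_rfl, hc⟩, fun _ _ _ => by simp⟩
    (continuous_flowVal S).continuousOn

variable [DecidableEq V] {S T : Finset V} {c w : V → V → ℝ}

lemma not_reflTransGen_residual_of_isMaxOn (hST : Disjoint S T) (hw : w ∈ flowsBelow S T c)
    (hmax : IsMaxOn (flowVal S) (flowsBelow S T c) w) {s t : V} (hs : s ∈ S) (ht : t ∈ T) :
    ¬ ReflTransGen (fun u v => 0 < c u v - w u v) s t := by
  intro hst
  obtain ⟨g, hg0, hgd, ε, hε, hg⟩ := exists_path_flow (sub_nonneg.2 hw.1.2) hst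
  have hmem : w + g ∈ flowsBelow S T c := by
    refine ⟨⟨add_nonneg hw.1.1 hg0, fun u v => ?_⟩, fun v hvS hvT => ?_⟩
    · exact le_sub_iff_add_le'.1 hgd u v
    · rw [map_add, Pi.add_apply, hw.2 v hvS hvT, hg, Pi.sub_apply,
        Pi.single_eq_of_ne (ne_of_mem_of_not_mem hs hvS).symm,
        Pi.single_eq_of_ne (ne_of_mem_of_not_mem ht hvT).symm]
      simp
  have hval : flowVal S (w + g) = flowVal S w + ε := by
    simp only [flowVal_eq_sum_netOutflow, map_add, Pi.add_apply, sum_add_distrib, hg,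
      Pi.sub_apply, sum_sub_distrib, sum_pi_single', if_pos hs,
      if_neg (disjoint_right.1 hST ht), sub_zero]
  linarith [isMaxOn_iff.1 hmax _ hmem]

lemma sum_netOutflow_eq_flowVal {A : Finset V} (hSA : S ⊆ A) (hAT : Disjoint A T)
    (hw : ∀ v, v ∉ S → v ∉ T → netOutflow w v = 0) :
    ∑ v ∈ A, netOutflow w v = flowVal S w := by
  rw [← sum_sdiff hSA, flowVal_eq_sum_netOutflow, add_eq_right]
  exact sum_eq_zero fun v hv =>
    hw v (mem_sdiff.1 hv).2 (disjoint_left.1 hAT (mem_sdiff.1 hv).1)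

lemma flowVal_sub_sum_abs_netOutflow_le {A : Finset V} (hSA : S ⊆ A) (hAT : Disjoint A T)
    (w : V → V → ℝ) :
    flowVal S w - ∑ v ∈ univ \ (S ∪ T), |netOutflow w v| ≤ ∑ v ∈ A, netOutflow w v := by
  have hinner : A \ S ⊆ univ \ (S ∪ T) := fun v hv => by
    simp only [mem_sdiff, mem_union, mem_univ, true_and] at hv ⊢
    exact fun h => h.elim hv.2 (disjoint_left.1 hAT hv.1)
  calc flowVal S w - ∑ v ∈ univ \ (S ∪ T), |netOutflow w v|
      ≤ flowVal S w - ∑ v ∈ A \ S, |netOutflow w v| :=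
        sub_le_sub_left (sum_le_sum_of_subset_of_nonneg hinner fun _ _ _ => abs_nonneg _) _
    _ ≤ flowVal S w + ∑ v ∈ A \ S, netOutflow w v := by
        rw [sub_eq_add_neg, ← sum_neg_distrib]
        gcongr with v
        exact neg_abs_le _
    _ = ∑ v ∈ A, netOutflow w v := by rw [add_comm, flowVal_eq_sum_netOutflow, sum_sdiff hSA]

lemma flowVal_sub_sum_abs_netOutflow_le_of_isMaxOn (hST : Disjoint S T)
    (hw : w ∈ flowsBelow S T c) (hmax : IsMaxOn (flowVal S) (flowsBelow S T c) w) :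
    flowVal S c - ∑ v ∈ univ \ (S ∪ T), |netOutflow c v| ≤ flowVal S w := by
  classical
  set A := univ.filter fun v => ∃ s ∈ S, ReflTransGen (fun u v => 0 < c u v - w u v) s v
  have hSA : S ⊆ A := fun s hs => mem_filter.2 ⟨mem_univ s, s, hs, .refl⟩
  have hAT : Disjoint A T := disjoint_left.2 fun t htA ht => by
    obtain ⟨s, hs, hst⟩ := (mem_filter.1 htA).2
    exact not_reflTransGen_residual_of_isMaxOn hST hw hmax hs ht hst
  have hcut : ∑ v ∈ A, netOutflow (c - w) v ≤ 0 := by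
    refine sum_netOutflow_nonpos (sub_nonneg.2 hw.1.2) fun v hv u hu => not_lt.1 fun hvu => ?_
    obtain ⟨s, hs, hsv⟩ := (mem_filter.1 hv).2
    exact hu (mem_filter.2 ⟨mem_univ u, s, hs, hsv.tail hvu⟩)
  rw [map_sub] at hcut
  simp only [Pi.sub_apply, sum_sub_distrib, sum_netOutflow_eq_flowVal hSA hAT hw.2] at hcut
  linarith [flowVal_sub_sum_abs_netOutflow_le hSA hAT c]

end

theorem leaky_flow_to_feasible_flow_general {V : Type*} [Fintype V] [DecidableEq V]
    (C : V → V → ℝ)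
    (S T : Finset V) (hST : Disjoint S T)
    (wt : V → V → ℝ) (hwt0 : ∀ u v, 0 ≤ wt u v)
    (hwtC : ∀ u v, wt u v + wt v u ≤ C u v) :
    ∃ w : V → V → ℝ, IsFeasibleFlow C S T w ∧
      flowVal S w ≥ flowVal S wt -
        ∑ v ∈ univ \ (S ∪ T), |(∑ u, wt u v) - (∑ u, wt v u)| := by
  obtain ⟨w, hw, hmax⟩ := exists_isMaxOn_flowVal S T (c := wt) hwt0
  refine ⟨w, ⟨hw.1.1, fun u v => ?_, fun v hvS hvT => sub_eq_zero.1 (hw.2 v hvS hvT)⟩, ?_⟩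
  · linarith [hw.1.2 u v, hw.1.2 v u, hwtC u v]
  · simpa only [netOutflow_apply, abs_sub_comm] using
      flowVal_sub_sum_abs_netOutflow_le_of_isMaxOn hST hw hmax

/-- Given a leaky flow `wt` (nonnegative, satisfying the capacity constraints but not
necessarily conservation of flow), there exists a feasible flow whose value is at least the
value of `wt` minus the sum of the absolute values of the leaks. -/
theorem leaky_flow_to_feasible_flow {V : Type*} [Fintype V] [DecidableEq V]
    (C : V → V → ℝ) (hC0 : ∀ u v, 0 ≤ C u v) (hCsymm : ∀ u v, C u v = C v u)
    (S T : Finset V) (hST : Disjoint S T)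
    (wt : V → V → ℝ) (hwt0 : ∀ u v, 0 ≤ wt u v)
    (hwtC : ∀ u v, wt u v + wt v u ≤ C u v) :
    ∃ w : V → V → ℝ, IsFeasibleFlow C S T w ∧
      flowVal S w ≥ flowVal S wt -
        ∑ v ∈ univ \ (S ∪ T), |(∑ u, wt u v) - (∑ u, wt v u)| :=
  leaky_flow_to_feasible_flow_general C S T hST wt hwt0 hwtC
end

section
/- Let G=(V,C,S,T) be a flow graph and H a group acting on V such that H preserves S setwise, preserves T setwise, and C(u,v)=C(h·u,h·v) for all h∈H and u,v∈V. Define the quotient flow graph G/H on the orbit set V/H with capacities (C/H)(A,B) = Σ_{u∈A} Σ_{v∈B} C(u,v), sources S/H, and sinks T/H. Then the maximum flow value of G equals the maximum flow value of G/H. -/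
open Finset

noncomputable def maxflowval {V : Type*} [Fintype V] (C : V → V → ℝ) (S T : Finset V) : ℝ :=
  sSup {x : ℝ | ∃ w : V → V → ℝ, IsFeasibleFlow C S T w ∧ flowVal S w = x}

namespace Flow

variable {V W : Type*} [DecidableEq W] {S T : Finset V} {f : V → W}

def Saturated (f : V → W) (S : Finset V) : Prop := ∀ u v, f u = f v → u ∈ S → v ∈ S

lemma Saturated.mem_of_mem_image (hS : Saturated f S) {u : V} (hu : f u ∈ S.image f) :
    u ∈ S := by
  obtain ⟨s, hs, hsu⟩ := mem_image.mp hu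
  exact hS s u hsu hs

lemma saturated_orbitRel_mk {H : Type*} [Group H] [MulAction H V]
    (hS : ∀ (h : H), ∀ s ∈ S, h • s ∈ S) :
    Saturated (Quotient.mk (MulAction.orbitRel H V)) S := by
  intro u v huv hu
  obtain ⟨h, rfl⟩ := Quotient.exact huv.symm
  exact hS h u hu

variable [Fintype V] {C : V → V → ℝ}

lemma Saturated.filter_eq (hS : Saturated f S) {u : V} (hu : u ∈ S) :
    S.filter (fun v => f v = f u) = univ.filter (fun v => f v = f u) := by
  ext v
  simp only [mem_filter, mem_univ, true_and, and_iff_right_iff_imp]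
  exact fun hv => hS u v hv.symm hu

def netOut (w : V → V → ℝ) (v : V) : ℝ := ∑ u, w v u - ∑ u, w u v

lemma flowVal_eq_sum_netOut (S : Finset V) (w : V → V → ℝ) :
    flowVal S w = ∑ s ∈ S, netOut w s := rfl

lemma _root_.IsFeasibleFlow.netOut_eq_zero {w : V → V → ℝ} (hw : IsFeasibleFlow C S T w)
    {v : V} (hvS : v ∉ S) (hvT : v ∉ T) : netOut w v = 0 :=
  sub_eq_zero.mpr (hw.2.2 v hvS hvT)

lemma _root_.IsFeasibleFlow.eq_zero_of_cap_eq_zero {w : V → V → ℝ}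
    (hw : IsFeasibleFlow C S T w) {u v : V} (h : C u v = 0) : w u v = 0 := by
  linarith [hw.1 u v, hw.1 v u, hw.2.1 u v]

def pushforward (f : V → W) (w : V → V → ℝ) (A B : W) : ℝ :=
  ∑ u with f u = A, ∑ v with f v = B, w u v

lemma pushforward_swap (f : V → W) (w : V → V → ℝ) (A B : W) :
    pushforward f w B A = pushforward f (fun u v => w v u) A B :=
  sum_comm

lemma pushforward_symm {w : V → V → ℝ} (hw : ∀ u v, w u v = w v u) (A B : W) :
    pushforward f w A B = pushforward f w B A := by
  rw [pushforward_swap f w A B, show (fun u v => w v u) = w from funext₂ fun u v => (hw u v).symm]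

lemma pushforward_nonneg {w : V → V → ℝ} (hw : ∀ u v, 0 ≤ w u v) (A B : W) :
    0 ≤ pushforward f w A B :=
  sum_nonneg fun u _ => sum_nonneg fun v _ => hw u v

lemma pushforward_add (w w' : V → V → ℝ) (A B : W) :
    pushforward f (fun u v => w u v + w' u v) A B = pushforward f w A B + pushforward f w' A B := by
  simp only [pushforward, sum_add_distrib]

lemma pushforward_mono {w w' : V → V → ℝ} (h : ∀ u v, w u v ≤ w' u v) (A B : W) :
    pushforward f w A B ≤ pushforward f w' A B :=
  sum_le_sum fun u _ => sum_le_sum fun v _ => h u v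

def IsEquitable (f : V → W) (C : V → V → ℝ) : Prop :=
  ∀ u u' B, f u = f u' → ∑ v with f v = B, C u v = ∑ v with f v = B, C u' v

lemma IsEquitable.pushforward_eq (hC : IsEquitable f C) (u : V) (B : W) :
    pushforward f C (f u) B = #{u' | f u' = f u} * ∑ v with f v = B, C u v := by
  rw [← nsmul_eq_mul, ← sum_const]
  exact sum_congr rfl fun u' hu' => hC u' u B (mem_filter.mp hu').2

lemma IsEquitable.sum_fiber_mul_div (hC : IsEquitable f C) (u : V) (B : W) {x : ℝ}
    (hx : pushforward f C (f u) B = 0 → x = 0) :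
    ∑ v with f v = B, x * C u v / pushforward f C (f u) B = x / #{u' | f u' = f u} := by
  rw [← sum_div, ← mul_sum, hC.pushforward_eq]
  by_cases hr : ∑ v with f v = B, C u v = 0
  · rw [hx (by rw [hC.pushforward_eq, hr, mul_zero]), zero_mul, zero_div, zero_div]
  · exact mul_div_mul_right x _ hr

/-- With `x / 0 = 0`, the lift vanishes between fibres joined by no capacity. -/
noncomputable def lift (f : V → W) (C : V → V → ℝ) (w : W → W → ℝ) (u v : V) : ℝ :=
  w (f u) (f v) * C u v / pushforward f C (f u) (f v)

variable [Fintype W]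

lemma sum_pushforward (f : V → W) (w : V → V → ℝ) (A : W) :
    ∑ B, pushforward f w A B = ∑ u with f u = A, ∑ v, w u v := by
  unfold pushforward
  rw [sum_comm]
  exact sum_congr rfl fun u _ => sum_fiberwise univ f (w u)

lemma netOut_pushforward (f : V → W) (w : V → V → ℝ) (A : W) :
    netOut (pushforward f w) A = ∑ u with f u = A, netOut w u := by
  simp only [netOut, pushforward_swap f w A, sum_pushforward, ← sum_sub_distrib]

theorem isFeasibleFlow_pushforward {w : V → V → ℝ} (hw : IsFeasibleFlow C S T w) :
    IsFeasibleFlow (pushforward f C) (S.image f) (T.image f) (pushforward f w) := by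
  refine ⟨pushforward_nonneg hw.1, fun A B => ?_, fun A hAS hAT => ?_⟩
  · rw [pushforward_swap f w A B, ← pushforward_add]
    exact pushforward_mono hw.2.1 A B
  · refine sub_eq_zero.mp ?_
    rw [← netOut, netOut_pushforward]
    refine sum_eq_zero fun u hu => hw.netOut_eq_zero ?_ ?_
    · exact fun huS => hAS ((mem_filter.mp hu).2 ▸ mem_image_of_mem f huS)
    · exact fun huT => hAT ((mem_filter.mp hu).2 ▸ mem_image_of_mem f huT)

theorem flowVal_pushforward (hS : Saturated f S) (w : V → V → ℝ) :
    flowVal (S.image f) (pushforward f w) = flowVal S w := by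
  simp only [flowVal_eq_sum_netOut, netOut_pushforward]
  exact sum_image' _ fun u hu => by rw [hS.filter_eq hu]

section Lift

variable (hCsymm : ∀ u v, C u v = C v u) (hC : IsEquitable f C) {w : W → W → ℝ}
  (hw : ∀ A B, pushforward f C A B = 0 → w A B = 0)
include hC hw

lemma IsEquitable.sum_lift_out (u : V) :
    ∑ v, lift f C w u v = (∑ B, w (f u) B) / #{u' | f u' = f u} := by
  rw [← sum_fiberwise univ f (lift f C w u), sum_div]
  refine sum_congr rfl fun B _ => ?_
  rw [← hC.sum_fiber_mul_div u B (hw _ _)]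
  refine sum_congr rfl fun v hv => ?_
  rw [lift, (mem_filter.mp hv).2]

include hCsymm

lemma IsEquitable.sum_lift_in (u : V) :
    ∑ v, lift f C w v u = (∑ B, w B (f u)) / #{u' | f u' = f u} := by
  rw [← sum_fiberwise univ f (fun v => lift f C w v u), sum_div]
  refine sum_congr rfl fun B _ => ?_
  rw [← hC.sum_fiber_mul_div u B fun h => hw _ _ ((pushforward_symm hCsymm _ _).trans h)]
  refine sum_congr rfl fun v hv => ?_
  rw [lift, (mem_filter.mp hv).2, hCsymm v u, pushforward_symm hCsymm B]

lemma IsEquitable.netOut_lift (u : V) :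
    netOut (lift f C w) u = netOut w (f u) / #{u' | f u' = f u} := by
  rw [netOut, netOut, hC.sum_lift_out hw, hC.sum_lift_in hCsymm hw, sub_div]

theorem flowVal_lift (hS : Saturated f S) :
    flowVal S (lift f C w) = flowVal (S.image f) w := by
  simp only [flowVal_eq_sum_netOut, hC.netOut_lift hCsymm hw]
  refine (sum_image' _ fun u hu => ?_).symm
  have hcard : (#{u' | f u' = f u} : ℝ) ≠ 0 :=
    Nat.cast_ne_zero.mpr (card_ne_zero.mpr ⟨u, by simp⟩)
  rw [hS.filter_eq hu, sum_congr rfl fun v hv => by rw [(mem_filter.mp hv).2], sum_const,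
    nsmul_eq_mul, mul_div_cancel₀ _ hcard]

end Lift

theorem isFeasibleFlow_lift (hC0 : ∀ u v, 0 ≤ C u v) (hCsymm : ∀ u v, C u v = C v u)
    (hC : IsEquitable f C) (hS : Saturated f S) (hT : Saturated f T) {w : W → W → ℝ}
    (hw : IsFeasibleFlow (pushforward f C) (S.image f) (T.image f) w) :
    IsFeasibleFlow C S T (lift f C w) := by
  refine ⟨fun u v => ?_, fun u v => ?_, fun u huS huT => ?_⟩
  · exact div_nonneg (mul_nonneg (hw.1 _ _) (hC0 u v)) (pushforward_nonneg hC0 _ _)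
  · rw [lift, lift, hCsymm v u, pushforward_symm hCsymm (f v), ← add_div, ← add_mul]
    refine div_le_of_le_mul₀ (pushforward_nonneg hC0 _ _) (hC0 u v) ?_
    rw [mul_comm (C u v)]
    exact mul_le_mul_of_nonneg_right (hw.2.1 _ _) (hC0 u v)
  · refine sub_eq_zero.mp ?_
    rw [← netOut, hC.netOut_lift hCsymm fun A B => hw.eq_zero_of_cap_eq_zero,
      hw.netOut_eq_zero (mt hS.mem_of_mem_image huS) (mt hT.mem_of_mem_image huT), zero_div]

theorem maxflowval_pushforward (hC0 : ∀ u v, 0 ≤ C u v) (hCsymm : ∀ u v, C u v = C v u)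
    (hC : IsEquitable f C) (hS : Saturated f S) (hT : Saturated f T) :
    maxflowval C S T = maxflowval (pushforward f C) (S.image f) (T.image f) := by
  refine congrArg sSup (Set.ext fun x => ⟨?_, ?_⟩)
  · rintro ⟨w, hw, rfl⟩
    exact ⟨pushforward f w, isFeasibleFlow_pushforward hw, flowVal_pushforward hS w⟩
  · rintro ⟨w, hw, rfl⟩
    exact ⟨lift f C w, isFeasibleFlow_lift hC0 hCsymm hC hS hT hw,
      flowVal_lift hCsymm hC (fun A B => hw.eq_zero_of_cap_eq_zero) hS⟩

lemma isEquitable_orbitRel_mk {H : Type*} [Group H] [MulAction H V]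
    [DecidableEq (MulAction.orbitRel.Quotient H V)]
    (hC : ∀ (h : H) (u v : V), C u v = C (h • u) (h • v)) :
    IsEquitable (Quotient.mk (MulAction.orbitRel H V)) C := by
  intro u u' B huu'
  obtain ⟨h, rfl⟩ := Quotient.exact huu'.symm
  refine sum_equiv (MulAction.toPerm h) (fun v => ?_) (fun v _ => hC h u v)
  simp only [mem_filter, mem_univ, true_and, MulAction.toPerm_apply,
    MulAction.orbitRel.Quotient.quotient_smul_eq]

end Flow

open scoped Classical in
theorem maxflow_quotient_general {V : Type*} [Fintype V]
    (C : V → V → ℝ) (hC0 : ∀ u v, 0 ≤ C u v) (hCsymm : ∀ u v, C u v = C v u)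
    (S T : Finset V)
    (H : Type*) [Group H] [MulAction H V]
    (hS : ∀ (h : H), ∀ s ∈ S, h • s ∈ S)
    (hT : ∀ (h : H), ∀ t ∈ T, h • t ∈ T)
    (hC : ∀ (h : H) (u v : V), C u v = C (h • u) (h • v)) :
    maxflowval C S T =
      maxflowval
        (fun A B : Quotient (MulAction.orbitRel H V) =>
          ∑ u ∈ univ.filter (fun u => Quotient.mk (MulAction.orbitRel H V) u = A),
            ∑ v ∈ univ.filter (fun v => Quotient.mk (MulAction.orbitRel H V) v = B), C u v)
        (S.image (Quotient.mk (MulAction.orbitRel H V)))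
        (T.image (Quotient.mk (MulAction.orbitRel H V))) :=
  Flow.maxflowval_pushforward hC0 hCsymm (Flow.isEquitable_orbitRel_mk hC)
    (Flow.saturated_orbitRel_mk hS) (Flow.saturated_orbitRel_mk hT)

open scoped Classical in
/-- If `H` is a symmetry group of a flow graph `G = (V, C, S, T)` (preserving sources, sinks
and capacities), then the maximum flow of `G` equals the maximum flow of the quotient flow
graph `G/H` on the orbit space, with capacities obtained by summing over orbit pairs. -/
theorem maxflow_quotient {V : Type*} [Fintype V] [DecidableEq V]
    (C : V → V → ℝ) (hC0 : ∀ u v, 0 ≤ C u v) (hCsymm : ∀ u v, C u v = C v u)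
    (S T : Finset V) (hST : Disjoint S T)
    (H : Type*) [Group H] [MulAction H V]
    (hS : ∀ (h : H), ∀ s ∈ S, h • s ∈ S)
    (hT : ∀ (h : H), ∀ t ∈ T, h • t ∈ T)
    (hC : ∀ (h : H) (u v : V), C u v = C (h • u) (h • v)) :
    maxflowval C S T =
      maxflowval
        (fun A B : Quotient (MulAction.orbitRel H V) =>
          ∑ u ∈ univ.filter (fun u => Quotient.mk (MulAction.orbitRel H V) u = A),
            ∑ v ∈ univ.filter (fun v => Quotient.mk (MulAction.orbitRel H V) v = B), C u v)
        (S.image (Quotient.mk (MulAction.orbitRel H V)))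
        (T.image (Quotient.mk (MulAction.orbitRel H V))) :=
  maxflow_quotient_general C hC0 hCsymm S T H hS hT hC
end

section
/- If G=(V,C,S,T) is a flow graph, H a symmetry group of G, and w a feasible flow of G, then the function (w/H)(A,B) = Σ_{a∈A} Σ_{b∈B} w(a,b) defined on orbit pairs is a feasible flow of the quotient flow graph G/H with the same value as w. -/
open Finset

open scoped Classical in
/-- If `H` is a symmetry group of the flow graph `G = (V, C, S, T)` and `w` a feasible flow of
`G`, then the orbit-summed flow `w/H` is a feasible flow of the quotient graph `G/H`
with the same value as `w`. -/
theorem quotient_flow_feasible {V : Type*} [Fintype V] [DecidableEq V]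
    (C : V → V → ℝ) (hC0 : ∀ u v, 0 ≤ C u v) (hCsymm : ∀ u v, C u v = C v u)
    (S T : Finset V) (hST : Disjoint S T)
    (H : Type*) [Group H] [MulAction H V]
    (hS : ∀ (h : H), ∀ s ∈ S, h • s ∈ S)
    (hT : ∀ (h : H), ∀ t ∈ T, h • t ∈ T)
    (hC : ∀ (h : H) (u v : V), C u v = C (h • u) (h • v))
    (w : V → V → ℝ) (hw : IsFeasibleFlow C S T w) :
    IsFeasibleFlow
      (fun A B : Quotient (MulAction.orbitRel H V) =>
        ∑ u ∈ univ.filter (fun u => Quotient.mk (MulAction.orbitRel H V) u = A),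
          ∑ v ∈ univ.filter (fun v => Quotient.mk (MulAction.orbitRel H V) v = B), C u v)
      (S.image (Quotient.mk (MulAction.orbitRel H V)))
      (T.image (Quotient.mk (MulAction.orbitRel H V)))
      (fun A B : Quotient (MulAction.orbitRel H V) =>
        ∑ a ∈ univ.filter (fun a => Quotient.mk (MulAction.orbitRel H V) a = A),
          ∑ b ∈ univ.filter (fun b => Quotient.mk (MulAction.orbitRel H V) b = B), w a b) ∧
    flowVal (S.image (Quotient.mk (MulAction.orbitRel H V)))
      (fun A B : Quotient (MulAction.orbitRel H V) =>
        ∑ a ∈ univ.filter (fun a => Quotient.mk (MulAction.orbitRel H V) a = A),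
          ∑ b ∈ univ.filter (fun b => Quotient.mk (MulAction.orbitRel H V) b = B), w a b)
      = flowVal S w := by
  obtain ⟨hw0, hwc, hwcons⟩ := hw
  set q : V → Quotient (MulAction.orbitRel H V) := Quotient.mk (MulAction.orbitRel H V) with hq
  -- closure of orbits through S (resp. T)
  have hclos : ∀ (U : Finset V), (∀ (h : H), ∀ u ∈ U, h • u ∈ U) →
      ∀ {a s : V}, s ∈ U → q a = q s → a ∈ U := by
    intro U hU a s hs h
    have h' : a ∈ MulAction.orbit H s := Quotient.exact h
    obtain ⟨g, rfl⟩ := h'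
    exact hU g s hs
  -- summing fibers over all orbits gives the full sum
  have key : ∀ (f : V → ℝ),
      (∑ B : Quotient (MulAction.orbitRel H V),
        ∑ v ∈ univ.filter (fun v => q v = B), f v) = ∑ v, f v := by
    intro f
    exact Finset.sum_fiberwise _ _ _
  -- outflow from an orbit equals total outflow of its members; same for inflow
  have hout : ∀ A : Quotient (MulAction.orbitRel H V),
      (∑ B : Quotient (MulAction.orbitRel H V),
        ∑ a ∈ univ.filter (fun a => q a = A),
          ∑ b ∈ univ.filter (fun b => q b = B), w a b)
      = ∑ a ∈ univ.filter (fun a => q a = A), ∑ v, w a v := by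
    intro A
    rw [Finset.sum_comm]
    exact Finset.sum_congr rfl fun a _ => key (w a)
  have hin : ∀ A : Quotient (MulAction.orbitRel H V),
      (∑ B : Quotient (MulAction.orbitRel H V),
        ∑ b ∈ univ.filter (fun b => q b = B),
          ∑ a ∈ univ.filter (fun a => q a = A), w b a)
      = ∑ a ∈ univ.filter (fun a => q a = A), ∑ v, w v a := by
    intro A
    rw [key (fun b => ∑ a ∈ univ.filter (fun a => q a = A), w b a), Finset.sum_comm]
  refine ⟨⟨?_, ?_, ?_⟩, ?_⟩
  · intro A B
    exact Finset.sum_nonneg fun a _ => Finset.sum_nonneg fun b _ => hw0 a b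
  · intro A B
    have : (∑ b ∈ univ.filter (fun b => q b = B),
        ∑ a ∈ univ.filter (fun a => q a = A), w b a)
        = ∑ a ∈ univ.filter (fun a => q a = A),
            ∑ b ∈ univ.filter (fun b => q b = B), w b a := Finset.sum_comm
    simp only [hq] at *
    rw [this, ← Finset.sum_add_distrib]
    refine Finset.sum_le_sum fun a _ => ?_
    rw [← Finset.sum_add_distrib]
    exact Finset.sum_le_sum fun b _ => hwc a b
  · intro A hAS hAT
    rw [hout A, hin A]
    refine Finset.sum_congr rfl fun a ha => ?_
    have haq : q a = A := (Finset.mem_filter.mp ha).2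
    have haS : a ∉ S := fun h => hAS (haq ▸ Finset.mem_image_of_mem q h)
    have haT : a ∉ T := fun h => hAT (haq ▸ Finset.mem_image_of_mem q h)
    exact hwcons a haS haT
  · unfold flowVal
    have step1 : ∀ A ∈ S.image q,
        ((∑ B : Quotient (MulAction.orbitRel H V),
            ∑ a ∈ univ.filter (fun a => q a = A),
              ∑ b ∈ univ.filter (fun b => q b = B), w a b)
          - ∑ B : Quotient (MulAction.orbitRel H V),
            ∑ b ∈ univ.filter (fun b => q b = B),
              ∑ a ∈ univ.filter (fun a => q a = A), w b a)
        = ∑ a ∈ S.filter (fun a => q a = A), ((∑ v, w a v) - ∑ v, w v a) := by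
      intro A hA
      obtain ⟨s, hs, rfl⟩ := Finset.mem_image.mp hA
      have hfil : univ.filter (fun a => q a = q s) = S.filter (fun a => q a = q s) := by
        ext a
        simp only [Finset.mem_filter, Finset.mem_univ, true_and]
        exact ⟨fun h => ⟨hclos S hS hs h, h⟩, fun h => h.2⟩
      rw [hout, hin, ← Finset.sum_sub_distrib, hfil]
    calc (∑ A ∈ S.image q,
            ((∑ B : Quotient (MulAction.orbitRel H V),
                ∑ a ∈ univ.filter (fun a => q a = A),
                  ∑ b ∈ univ.filter (fun b => q b = B), w a b)
              - ∑ B : Quotient (MulAction.orbitRel H V),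
                ∑ b ∈ univ.filter (fun b => q b = B),
                  ∑ a ∈ univ.filter (fun a => q a = A), w b a))
        = ∑ A ∈ S.image q, ∑ a ∈ S.filter (fun a => q a = A),
            ((∑ v, w a v) - ∑ v, w v a) := Finset.sum_congr rfl step1
      _ = ∑ a ∈ S, ((∑ v, w a v) - ∑ v, w v a) :=
          Finset.sum_fiberwise_of_maps_to (fun a ha => Finset.mem_image_of_mem q ha) _
end

section
/- In a flow graph in which every path from a source to a sink uses at least d edges of positive capacity, and the total sum of capacities over all undirected edges equals 1, the maximum flow value is at most 1/d. -/
open Finset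

namespace MaxflowAux

variable {V : Type*} [Fintype V] [DecidableEq V]

/-- BFS level sets: vertices reachable from `S` by a positive-capacity path of length `≤ k`. -/
noncomputable def levels (C : V → V → ℝ) (S : Finset V) : ℕ → Finset V
  | 0 => S
  | k+1 => levels C S k ∪ Finset.univ.filter (fun v => ∃ u ∈ levels C S k, 0 < C u v)

lemma levels_zero (C : V → V → ℝ) (S : Finset V) : levels C S 0 = S := rfl

lemma levels_mono (C : V → V → ℝ) (S : Finset V) : Monotone (levels C S) :=
  monotone_nat_of_le_succ fun _ => Finset.subset_union_left

lemma levels_step {C : V → V → ℝ} {S : Finset V} {k : ℕ} {u v : V}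
    (hu : u ∈ levels C S k) (h : 0 < C u v) : v ∈ levels C S (k+1) := by
  rw [levels, Finset.mem_union]
  exact Or.inr (Finset.mem_filter.mpr ⟨Finset.mem_univ v, u, hu, h⟩)

lemma exists_path {C : V → V → ℝ} {S : Finset V} :
    ∀ k, ∀ v ∈ levels C S k, ∃ n, n ≤ k ∧ ∃ p : Fin (n+1) → V, p 0 ∈ S ∧
      p (Fin.last n) = v ∧ ∀ i : Fin n, 0 < C (p i.castSucc) (p i.succ) := by
  intro k
  induction k with
  | zero => intro v hv; exact ⟨0, le_refl 0, fun _ => v, hv, rfl, fun i => i.elim0⟩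
  | succ k ih =>
    intro v hv
    rw [levels, Finset.mem_union] at hv
    rcases hv with h | h
    · obtain ⟨n, hn, rest⟩ := ih v h
      exact ⟨n, hn.trans (Nat.le_succ k), rest⟩
    · rw [Finset.mem_filter] at h
      obtain ⟨u, hu, hpos⟩ := h.2
      obtain ⟨n, hn, p, hp0, hpl, hpe⟩ := ih u hu
      refine ⟨n+1, by omega, Fin.snoc p v, ?_, ?_, ?_⟩
      · have h0 : (0 : Fin (n+2)) = Fin.castSucc 0 := rfl
        rw [h0, Fin.snoc_castSucc]; exact hp0
      · simp [Fin.snoc_last]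
      · intro i
        refine Fin.lastCases ?_ ?_ i
        · rw [Fin.succ_last, Fin.snoc_last, Fin.snoc_castSucc, hpl]
          exact hpos
        · intro j
          rw [Fin.succ_castSucc, Fin.snoc_castSucc, Fin.snoc_castSucc]
          exact hpe j

/-- The flow value equals the net flow across any cut separating sources from sinks. -/
lemma flow_cut {C : V → V → ℝ} {S T : Finset V} {w : V → V → ℝ}
    (hw : IsFeasibleFlow C S T w) (A : Finset V) (hSA : S ⊆ A)
    (hAT : ∀ v ∈ A, v ∉ T) :
    flowVal S w = ∑ u ∈ A, ∑ v ∈ Aᶜ, (w u v - w v u) := by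
  obtain ⟨hw0, hwc, hcons⟩ := hw
  have h1 : flowVal S w = ∑ v ∈ A, ((∑ u, w v u) - ∑ u, w u v) := by
    rw [flowVal, ← Finset.sum_sdiff hSA]
    have hz : ∑ v ∈ A \ S, ((∑ u, w v u) - ∑ u, w u v) = 0 := by
      apply Finset.sum_eq_zero
      intro v hv
      rw [Finset.mem_sdiff] at hv
      rw [hcons v hv.2 (hAT v hv.1), sub_self]
    rw [hz, zero_add]
  rw [h1]
  calc ∑ v ∈ A, ((∑ u, w v u) - ∑ u, w u v)
      = ∑ v ∈ A, (((∑ u ∈ A, w v u) - ∑ u ∈ A, w u v)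
          + ((∑ u ∈ Aᶜ, w v u) - ∑ u ∈ Aᶜ, w u v)) := by
        refine Finset.sum_congr rfl fun v _ => ?_
        rw [← Finset.sum_add_sum_compl A (fun u => w v u),
            ← Finset.sum_add_sum_compl A (fun u => w u v)]
        ring
    _ = ((∑ v ∈ A, ∑ u ∈ A, w v u) - ∑ v ∈ A, ∑ u ∈ A, w u v)
          + ∑ v ∈ A, ((∑ u ∈ Aᶜ, w v u) - ∑ u ∈ Aᶜ, w u v) := by
        rw [Finset.sum_add_distrib, Finset.sum_sub_distrib]
    _ = ∑ v ∈ A, ∑ u ∈ Aᶜ, (w v u - w u v) := by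
        rw [Finset.sum_comm (s := A) (t := A) (f := fun v u => w v u)]
        simp [Finset.sum_sub_distrib]

lemma double_ite (A : Finset V) (C : V → V → ℝ) :
    ∑ u, ∑ v, (if u ∈ A ∧ v ∉ A then C u v else 0) = ∑ u ∈ A, ∑ v ∈ Aᶜ, C u v := by
  have h1 : ∀ u, (∑ v, if u ∈ A ∧ v ∉ A then C u v else 0)
      = if u ∈ A then ∑ v ∈ Aᶜ, C u v else 0 := by
    intro u
    by_cases hu : u ∈ A
    · simp only [hu, true_and, if_true]
      rw [← Finset.sum_filter]
      congr 1
      ext v; simp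
    · simp [hu]
  rw [Finset.sum_congr rfl (fun u _ => h1 u), ← Finset.sum_filter]
  congr 1
  ext u; simp

/-- Each undirected edge contributes to at most one level cut, in at most one direction. -/
lemma e_pair_le {C : V → V → ℝ} (hC0 : ∀ u v, 0 ≤ C u v)
    (hCsymm : ∀ u v, C u v = C v u) (S : Finset V) (d : ℕ) (u v : V) :
    (∑ k ∈ Finset.range d, if u ∈ levels C S k ∧ v ∉ levels C S k then C u v else 0)
    + (∑ k ∈ Finset.range d, if v ∈ levels C S k ∧ u ∉ levels C S k then C v u else 0)
      ≤ C u v := by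
  set L := levels C S with hL
  set K1 := (Finset.range d).filter (fun k => u ∈ L k ∧ v ∉ L k) with hK1
  set K2 := (Finset.range d).filter (fun k => v ∈ L k ∧ u ∉ L k) with hK2
  have e1 : (∑ k ∈ Finset.range d, if u ∈ L k ∧ v ∉ L k then C u v else 0)
      = (K1.card : ℝ) * C u v := by
    rw [hK1, ← Finset.sum_filter, Finset.sum_const, nsmul_eq_mul]
  have e2 : (∑ k ∈ Finset.range d, if v ∈ L k ∧ u ∉ L k then C v u else 0)
      = (K2.card : ℝ) * C v u := by
    rw [hK2, ← Finset.sum_filter, Finset.sum_const, nsmul_eq_mul]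
  rw [e1, e2, hCsymm v u]
  rcases eq_or_lt_of_le (hC0 u v) with hz | hpos
  · rw [← hz]; ring_nf; exact le_refl 0
  · have hdisj : Disjoint K1 K2 := by
      rw [Finset.disjoint_left]
      intro k h1 h2
      rw [hK1, Finset.mem_filter] at h1
      rw [hK2, Finset.mem_filter] at h2
      exact h1.2.2 h2.2.1
    have hcard : (K1 ∪ K2).card ≤ 1 := by
      rw [Finset.card_le_one]
      intro k hk k' hk'
      have hmem : ∀ j, j ∈ K1 ∪ K2 →
          (u ∈ L j ∧ v ∉ L j) ∨ (v ∈ L j ∧ u ∉ L j) := by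
        intro j hj
        rcases Finset.mem_union.mp hj with h | h
        · exact Or.inl (Finset.mem_filter.mp h).2
        · exact Or.inr (Finset.mem_filter.mp h).2
      have hPP : ∀ j j', (u ∈ L j ∧ v ∉ L j) → (u ∈ L j' ∧ v ∉ L j') → j' ≤ j := by
        intro j j' h h'
        by_contra hc
        push_neg at hc
        exact h'.2 (levels_mono C S (Nat.succ_le_of_lt hc) (levels_step h.1 hpos))
      have hQQ : ∀ j j', (v ∈ L j ∧ u ∉ L j) → (v ∈ L j' ∧ u ∉ L j') → j' ≤ j := by
        intro j j' h h'
        by_contra hc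
        push_neg at hc
        have hpos' : 0 < C v u := by rw [← hCsymm u v]; exact hpos
        exact h'.2 (levels_mono C S (Nat.succ_le_of_lt hc) (levels_step h.1 hpos'))
      have hPQ : ∀ j j', (u ∈ L j ∧ v ∉ L j) → (v ∈ L j' ∧ u ∉ L j') → False := by
        intro j j' h h'
        rcases le_total j j' with hle | hle
        · exact h'.2 (levels_mono C S hle h.1)
        · exact h.2 (levels_mono C S hle h'.1)
      rcases hmem k hk with h | h <;> rcases hmem k' hk' with h' | h'
      · exact le_antisymm (hPP k' k h' h) (hPP k k' h h')
      · exact absurd (hPQ k k' h h') (fun x => x)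
      · exact absurd (hPQ k' k h' h) (fun x => x)
      · exact le_antisymm (hQQ k' k h' h) (hQQ k k' h h')
    have hsum : K1.card + K2.card ≤ 1 := by
      rw [← Finset.card_union_of_disjoint hdisj]
      exact hcard
    have hsum' : ((K1.card : ℝ) + K2.card) ≤ 1 := by exact_mod_cast hsum
    nlinarith

end MaxflowAux

/-- In a flow graph where every path from a source to a sink uses at least `d` edges of
positive capacity, and where the total capacity over undirected edges is `1`, every feasible
flow has value at most `1/d`. -/
theorem maxflow_le_of_long_paths {V : Type*} [Fintype V] [DecidableEq V]
    (C : V → V → ℝ) (hC0 : ∀ u v, 0 ≤ C u v) (hCsymm : ∀ u v, C u v = C v u)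
    (S T : Finset V) (hST : Disjoint S T)
    (d : ℕ) (hd : 0 < d)
    (hpath : ∀ (n : ℕ) (p : Fin (n + 1) → V), p 0 ∈ S → p (Fin.last n) ∈ T →
      (∀ i : Fin n, 0 < C (p i.castSucc) (p i.succ)) → d ≤ n)
    (htot : (1 / 2 : ℝ) * ∑ u, ∑ v ∈ univ \ {u}, C u v = 1) :
    ∀ w : V → V → ℝ, IsFeasibleFlow C S T w → flowVal S w ≤ 1 / d := by
  intro w hw
  set L : ℕ → Finset V := MaxflowAux.levels C S with hLdef
  have hS : ∀ k, S ⊆ L k := by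
    intro k
    have : L 0 ⊆ L k := MaxflowAux.levels_mono C S (Nat.zero_le k)
    rwa [hLdef, MaxflowAux.levels_zero] at this
  have hAT : ∀ k, k < d → ∀ v ∈ L k, v ∉ T := by
    intro k hk v hv hvT
    obtain ⟨n, hn, p, hp0, hpl, hpe⟩ := MaxflowAux.exists_path k v hv
    have := hpath n p hp0 (by rw [hpl]; exact hvT) hpe
    omega
  have hcut : ∀ k ∈ Finset.range d,
      flowVal S w ≤ ∑ u, ∑ v, (if u ∈ L k ∧ v ∉ L k then C u v else 0) := by
    intro k hk
    rw [MaxflowAux.double_ite,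
        MaxflowAux.flow_cut hw (L k) (hS k) (hAT k (Finset.mem_range.mp hk))]
    refine Finset.sum_le_sum fun u _ => Finset.sum_le_sum fun v _ => ?_
    have h1 := hw.1 v u
    have h2 := hw.2.1 u v
    linarith
  have hd' : (0:ℝ) < d := by exact_mod_cast hd
  have hkey : (d:ℝ) * flowVal S w ≤ 1 := by
    have h1 : (d:ℝ) * flowVal S w = ∑ _k ∈ Finset.range d, flowVal S w := by
      rw [Finset.sum_const, Finset.card_range, nsmul_eq_mul]
    rw [h1]
    have h2 : ∑ k ∈ Finset.range d, flowVal S w ≤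
        ∑ k ∈ Finset.range d, ∑ u, ∑ v, (if u ∈ L k ∧ v ∉ L k then C u v else 0) :=
      Finset.sum_le_sum hcut
    refine h2.trans ?_
    rw [Finset.sum_comm]
    rw [Finset.sum_congr rfl (fun u _ => Finset.sum_comm)]
    set e : V → V → ℝ :=
      fun u v => ∑ k ∈ Finset.range d, if u ∈ L k ∧ v ∉ L k then C u v else 0 with he
    show ∑ u, ∑ v, e u v ≤ 1
    have hdiag : ∀ u, e u u = 0 := by
      intro u
      apply Finset.sum_eq_zero
      intro k _
      simp
    have hsplit : ∀ (f : V → ℝ) (u : V), ∑ v, f v = f u + ∑ v ∈ univ \ {u}, f v := by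
      intro f u
      rw [← Finset.erase_eq]
      exact (Finset.add_sum_erase _ f (Finset.mem_univ u)).symm
    have hE2 : (∑ u, ∑ v, e u v) + (∑ u, ∑ v, e u v) ≤ 2 := by
      have hswap : ∑ u, ∑ v, e u v = ∑ u, ∑ v, e v u := Finset.sum_comm
      have step1 : (∑ u, ∑ v, e u v) + (∑ u, ∑ v, e u v)
          = ∑ u, ∑ v, (e u v + e v u) := by
        nth_rewrite 2 [hswap]
        rw [← Finset.sum_add_distrib]
        refine Finset.sum_congr rfl fun u _ => ?_
        rw [← Finset.sum_add_distrib]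
      rw [step1]
      have step2 : ∑ u, ∑ v, (e u v + e v u)
          = ∑ u, ∑ v ∈ univ \ {u}, (e u v + e v u) := by
        refine Finset.sum_congr rfl fun u _ => ?_
        rw [hsplit (fun v => e u v + e v u) u, hdiag u]
        ring_nf
      rw [step2]
      have step3 : ∑ u, ∑ v ∈ univ \ {u}, (e u v + e v u)
          ≤ ∑ u, ∑ v ∈ univ \ {u}, C u v := by
        refine Finset.sum_le_sum fun u _ => Finset.sum_le_sum fun v _ => ?_
        exact MaxflowAux.e_pair_le hC0 hCsymm S d u v
      refine step3.trans ?_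
      linarith
    linarith
  rw [le_div_iff₀ hd']
  linarith
end

section
/- Let M = M_{A,b,β,c}: F_k → F_{k'} be an affine lift and g ∈ F_k, g' ∈ F_{k'} be sink/source placement functions (a node indexed by the linear function χ_α is a sink iff g(α)=1 and a source iff g(α)=−1, similarly for g' on 𝔽₂^{k'}). Then M maps every node v_{χ_α} labeled by a sink (resp. source) of g to a sink (resp. source) node of g' if and only if M_{Aᵀ,β,b,c}(g') = g, i.e., g(α) = g'(Aᵀα+β)·(−1)^c·χ_b(α) for all α ∈ 𝔽₂^k. -/
open Finset

/-- The character `χ_α(x) = (−1)^⟨α,x⟩` on `𝔽₂^k`. -/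
noncomputable def chi {k : ℕ} (α x : Fin k → ZMod 2) : ℝ :=
  (-1 : ℝ) ^ (dotProduct α x).val

/-- The affine lift `M_{A,b,β,c}(f)(y) = f(Ay+b)·(−1)^c·χ_β(y)`. -/
noncomputable def liftMap {k k' : ℕ} (A : Matrix (Fin k) (Fin k') (ZMod 2))
    (b : Fin k → ZMod 2) (β : Fin k' → ZMod 2) (c : ZMod 2)
    (f : (Fin k → ZMod 2) → ℝ) : (Fin k' → ZMod 2) → ℝ :=
  fun y => f (A.mulVec y + b) * (-1 : ℝ) ^ c.val * chi β y

theorem liftMap_transpose_apply {k k' : ℕ} (A : Matrix (Fin k) (Fin k') (ZMod 2))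
    (b : Fin k → ZMod 2) (β : Fin k' → ZMod 2) (c : ZMod 2)
    (f : (Fin k' → ZMod 2) → ℝ) (α : Fin k → ZMod 2) :
    liftMap A.transpose β b c f α = f (Matrix.vecMul α A + β) * (-1 : ℝ) ^ c.val * chi b α := by
  rw [liftMap, Matrix.mulVec_transpose]

theorem forall_imp_and_imp_iff_eq_of_forall_eq_or_eq {ι R : Type*} {u v : R} {x g : ι → R}
    (hg : ∀ i, g i = u ∨ g i = v) :
    (∀ i, (g i = u → x i = u) ∧ (g i = v → x i = v)) ↔ x = g := by
  constructor
  · intro h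
    funext i
    rcases hg i with hu | hv
    · rw [(h i).1 hu, hu]
    · rw [(h i).2 hv, hv]
  · rintro rfl i
    exact ⟨id, id⟩

theorem lift_sink_source_iff_general {k k' : ℕ}
    (A : Matrix (Fin k) (Fin k') (ZMod 2))
    (b : Fin k → ZMod 2) (β : Fin k' → ZMod 2) (c : ZMod 2)
    (g : (Fin k → ZMod 2) → ℝ) (g' : (Fin k' → ZMod 2) → ℝ)
    (hg : ∀ α, g α = 1 ∨ g α = -1) :
    (∀ α : Fin k → ZMod 2,
        (g α = 1 → g' (Matrix.vecMul α A + β) * (-1 : ℝ) ^ c.val * chi b α = 1) ∧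
        (g α = -1 → g' (Matrix.vecMul α A + β) * (-1 : ℝ) ^ c.val * chi b α = -1))
      ↔ liftMap A.transpose β b c g' = g := by
  simp_rw [← liftMap_transpose_apply]
  exact forall_imp_and_imp_iff_eq_of_forall_eq_or_eq hg

/-- Let `g : F_k` and `g' : F_{k'}` be sink/source placements (a node `v_{χ_α}` is a sink iff
the placement value at `α` is `1` and a source iff it is `−1`).  The lift `M = M_{A,b,β,c}`
maps every sink node to a sink node and every source node to a source node — the status of
the lifted node `M(χ_α) = (−1)^c χ_b(α) · χ_{Aᵀα+β}` under `g'` being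
`g'(Aᵀα+β)·(−1)^c·χ_b(α)` — if and only if `M_{Aᵀ,β,b,c}(g') = g`. -/
theorem lift_sink_source_iff {k k' : ℕ} (hkk : k ≤ k')
    (A : Matrix (Fin k) (Fin k') (ZMod 2)) (hA : A.rank = k)
    (b : Fin k → ZMod 2) (β : Fin k' → ZMod 2) (c : ZMod 2)
    (g : (Fin k → ZMod 2) → ℝ) (g' : (Fin k' → ZMod 2) → ℝ)
    (hg : ∀ α, g α = 1 ∨ g α = -1) (hg' : ∀ α, g' α = 1 ∨ g' α = -1) :
    (∀ α : Fin k → ZMod 2,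
        (g α = 1 → g' (Matrix.vecMul α A + β) * (-1 : ℝ) ^ c.val * chi b α = 1) ∧
        (g α = -1 → g' (Matrix.vecMul α A + β) * (-1 : ℝ) ^ c.val * chi b α = -1))
      ↔ liftMap A.transpose β b c g' = g :=
  lift_sink_source_iff_general A b β c g g' hg
end

section
/- Fix f ∈ F_k and f' ∈ F_{k'} with dim(f) = dim(f') = d, where k ≤ k'. Let N_{f→f'} be the set of affine lifts M ∈ M_{k→k'} with M(f) = f'. Then the number of pairs (M₁,M₂) ∈ N_{f→f'} × N_{f→f'} with dim(affine(M₁) ∩ affine(M₂)) > d is at most |N_{f→f'}|² · (2^k − 2^d)² / (2^{k'} − 2^d). -/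
open Finset

/-- The Fourier coefficient `f̂_α = 2^{−k} Σ_x χ_α(x) f(x)`. -/
noncomputable def fhat {k : ℕ} (f : (Fin k → ZMod 2) → ℝ) (α : Fin k → ZMod 2) : ℝ :=
  (2 ^ k : ℝ)⁻¹ * ∑ x, chi α x * f x

/-- Parameters `(A, b, β, c)` of an affine lift `M_{A,b,β,c} ∈ M_{k→k'}`, with `A` of full
rank `k`. -/
def MParam (k k' : ℕ) :=
  {p : Matrix (Fin k) (Fin k') (ZMod 2) × (Fin k → ZMod 2) × (Fin k' → ZMod 2) × ZMod 2 //
    p.1.rank = k}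

/-- The affine lift determined by the parameters: `M(f)(y) = f(Ay+b)·(−1)^c·χ_β(y)`. -/
noncomputable def MParam.applyR {k k' : ℕ} (p : MParam k k') (f : (Fin k → ZMod 2) → ℝ) :
    (Fin k' → ZMod 2) → ℝ :=
  fun y => f (p.1.1.mulVec y + p.1.2.1) * (-1 : ℝ) ^ p.1.2.2.2.val * chi p.1.2.2.1 y

/-- `affine(M)`: the image of `T_M(x) = Aᵀx + β`. -/
def affOf {k k' : ℕ} (p : MParam k k') : Set (Fin k' → ZMod 2) :=
  Set.range fun x : Fin k → ZMod 2 => Matrix.vecMul x p.1.1 + p.1.2.2.1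

/-- The dimension of a subset of `𝔽₂^k`: the dimension of the direction of its affine span. -/
noncomputable def setDim {k : ℕ} (s : Set (Fin k → ZMod 2)) : ℕ :=
  Module.finrank (ZMod 2) (affineSpan (ZMod 2) s).direction

/-- `dim(f)`: the dimension of the affine span of the Fourier support of `f`. -/
noncomputable def dimOf {k : ℕ} (f : (Fin k → ZMod 2) → ℝ) : ℕ :=
  setDim {α | fhat f α ≠ 0}

/-! Let `V` be the affine span of the Fourier support of `f'`. For every lift `M` with
`M(f) = f'` the Fourier support of `f'` is the image under `T_M` of that of `f`, so
`V ⊆ affine(M)`. Hence two such lifts whose affine spaces meet in dimension `> d` share a point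
`γ ∉ V`, and the number of such pairs is at most `∑_{γ ∉ V} n(γ)²`, where `n(γ)` counts the lifts
whose affine space contains `γ`. A transvection of `𝔽₂^{k'}` fixing `V` pointwise and moving `γ₁`
to `γ₂` acts on lifts without changing `M(f)`, so `n` is constant off `V`; double counting gives
`∑_{γ ∉ V} n(γ) = |N| (2^k − 2^d)`, and there are `2^{k'} − 2^d` points off `V`. -/

open Matrix

section Fourier

variable {k : ℕ}

lemma neg_one_pow_val_add (a b : ZMod 2) :
    (-1 : ℝ) ^ (a + b).val = (-1) ^ a.val * (-1) ^ b.val := by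
  rw [ZMod.val_add, ← pow_add, ← neg_one_pow_eq_pow_mod_two]

lemma chi_add_left (α β x : Fin k → ZMod 2) : chi (α + β) x = chi α x * chi β x := by
  rw [chi, add_dotProduct, neg_one_pow_val_add, chi, chi]

lemma chi_add_right (α x y : Fin k → ZMod 2) : chi α (x + y) = chi α x * chi α y := by
  rw [chi, dotProduct_add, neg_one_pow_val_add, chi, chi]

lemma chi_comm (α x : Fin k → ZMod 2) : chi α x = chi x α := by
  rw [chi, dotProduct_comm, chi]

lemma chi_ne_zero (α x : Fin k → ZMod 2) : chi α x ≠ 0 :=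
  pow_ne_zero _ (by norm_num)

lemma chi_mulVec {k' : ℕ} (α : Fin k → ZMod 2) (A : Matrix (Fin k) (Fin k') (ZMod 2))
    (y : Fin k' → ZMod 2) : chi α (A *ᵥ y) = chi (α ᵥ* A) y := by
  rw [chi, Matrix.dotProduct_mulVec, chi]

lemma add_eq_zero_iff_eq_of_zmod_two {x y : Fin k → ZMod 2} : x + y = 0 ↔ x = y := by
  rw [add_eq_zero_iff_eq_neg, show -y = y from funext fun i => ZMod.neg_eq_self_mod_two (y i)]

lemma sum_chi (α : Fin k → ZMod 2) : ∑ x, chi α x = if α = 0 then 2 ^ k else 0 := by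
  split_ifs with hα
  · simp [hα, chi, ZMod.card]
  obtain ⟨i, hi⟩ := Function.ne_iff.mp hα
  set e : Fin k → ZMod 2 := Pi.single i 1
  have hflip : chi α e = -1 := by
    have key : ∀ a : ZMod 2, a ≠ 0 → a.val = 1 := by decide
    simp [e, chi, dotProduct_single, key _ hi]
  -- translating by `e` flips the sign of every term
  have : ∑ x, chi α x = -∑ x, chi α x := calc
    ∑ x, chi α x = ∑ x, chi α (x + e) :=
      (Fintype.sum_equiv (Equiv.addRight e) _ _ fun _ => rfl).symm
    _ = -∑ x, chi α x := by simp [chi_add_right, hflip]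
  linarith

lemma sum_chi_mul_chi (z x : Fin k → ZMod 2) :
    ∑ α, chi α z * chi α x = if z = x then 2 ^ k else 0 := by
  simp_rw [chi_comm _ z, chi_comm _ x, ← chi_add_left, sum_chi, add_eq_zero_iff_eq_of_zmod_two]

theorem fhat_inversion (f : (Fin k → ZMod 2) → ℝ) (x : Fin k → ZMod 2) :
    ∑ α, fhat f α * chi α x = f x := calc
  ∑ α, fhat f α * chi α x = (2 ^ k : ℝ)⁻¹ * ∑ z, f z * ∑ α, chi α z * chi α x := by
    simp only [fhat, Finset.mul_sum, Finset.sum_mul]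
    rw [Finset.sum_comm]
    exact Finset.sum_congr rfl fun _ _ => Finset.sum_congr rfl fun _ _ => by ring
  _ = f x := by simp [sum_chi_mul_chi]; field_simp

theorem fhat_injective : Function.Injective (fhat : ((Fin k → ZMod 2) → ℝ) → _) :=
  fun f g h => funext fun x => by rw [← fhat_inversion f, ← fhat_inversion g, h]

def fourierSupport (f : (Fin k → ZMod 2) → ℝ) : Set (Fin k → ZMod 2) := {α | fhat f α ≠ 0}

lemma fourierSupport_nonempty {f : (Fin k → ZMod 2) → ℝ} (hf : ∀ x, f x = 1 ∨ f x = -1) :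
    (fourierSupport f).Nonempty := by
  by_contra h
  have hzero : f 0 = 0 := by
    have hfhat : ∀ α, fhat f α = 0 := fun α => by_contra fun hα => h ⟨α, hα⟩
    simp [← fhat_inversion f 0, hfhat]
  rcases hf 0 with h0 | h0 <;> linarith

end Fourier

section AffineGeometry

variable {E : Type*} [AddCommGroup E] [Module (ZMod 2) E]

lemma exists_dual_vanishing_eq_one {W : Submodule (ZMod 2) E} {x y : E} (hx : x ∉ W)
    (hy : y ∉ W) :
    ∃ φ : Module.Dual (ZMod 2) E, (∀ w ∈ W, φ w = 0) ∧ φ x = 1 ∧ φ y = 1 := by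
  have hone : ∀ a : ZMod 2, a ≠ 0 → a = 1 := by decide
  have hzero : ∀ a : ZMod 2, a ≠ 1 → a = 0 := by decide
  have vanish : ∀ φ : Module.Dual (ZMod 2) E, W.map φ = ⊥ → ∀ w ∈ W, φ w = 0 :=
    fun φ hφ w hw => by simpa [hφ] using W.mem_map_of_mem (f := φ) hw
  obtain ⟨φ, hφx, hφW⟩ := W.exists_dual_map_eq_bot_of_notMem hx inferInstance
  obtain ⟨ψ, hψy, hψW⟩ := W.exists_dual_map_eq_bot_of_notMem hy inferInstance
  by_cases hφy : φ y = 1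
  · exact ⟨φ, vanish φ hφW, hone _ hφx, hφy⟩
  by_cases hψx : ψ x = 1
  · exact ⟨ψ, vanish ψ hψW, hψx, hone _ hψy⟩
  refine ⟨φ + ψ, fun w hw => ?_, ?_, ?_⟩
  · simp [vanish φ hφW w hw, vanish ψ hψW w hw]
  · simp [hone _ hφx, hzero _ hψx]
  · simp [hzero _ hφy, hone _ hψy]

lemma exists_affineEquiv_fix_of_notMem {V : AffineSubspace (ZMod 2) E} {γ₀ γ₁ γ₂ : E}
    (h₀ : γ₀ ∈ V) (h₁ : γ₁ ∉ V) (h₂ : γ₂ ∉ V) :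
    ∃ g : E ≃ᵃ[ZMod 2] E, (∀ γ ∈ V, g γ = γ) ∧ g γ₁ = γ₂ := by
  obtain ⟨φ, hφV, hφ₁, hφ₂⟩ := exists_dual_vanishing_eq_one (W := V.direction)
    (x := γ₁ - γ₀) (y := γ₂ - γ₀)
    (by rwa [← vsub_eq_sub, AffineSubspace.vsub_right_mem_direction_iff_mem h₀])
    (by rwa [← vsub_eq_sub, AffineSubspace.vsub_right_mem_direction_iff_mem h₀])
  have hφ : φ (γ₂ - γ₁) = 0 := by
    rw [← sub_sub_sub_cancel_right γ₂ γ₁ γ₀, map_sub, hφ₁, hφ₂, sub_self]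
  let g := (AffineEquiv.vaddConst (ZMod 2) γ₀).symm.trans
    ((LinearEquiv.transvection hφ).toAffineEquiv.trans (AffineEquiv.vaddConst (ZMod 2) γ₀))
  have hg : ∀ γ, g γ = γ + φ (γ - γ₀) • (γ₂ - γ₁) := fun γ => by
    change LinearEquiv.transvection hφ (γ - γ₀) + γ₀ = _
    rw [LinearEquiv.transvection.apply]
    abel
  refine ⟨g, fun γ hγ => ?_, ?_⟩
  · rw [hg, hφV _ (vsub_eq_sub γ γ₀ ▸ V.vsub_mem_direction hγ h₀), zero_smul, add_zero]
  · rw [hg, hφ₁, one_smul, add_sub_cancel]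

end AffineGeometry

lemma natCard_affineSubspace_eq_pow {K : Type*} [Field K] [Finite K] {E : Type*} [AddCommGroup E]
    [Module K E] [Finite E] {V : AffineSubspace K E} {γ₀ : E} (h₀ : γ₀ ∈ V) :
    Nat.card V = Nat.card K ^ Module.finrank K V.direction := by
  have : Nonempty V := ⟨⟨γ₀, h₀⟩⟩
  have : Module.Finite K E := Module.Finite.of_finite
  rw [← Module.natCard_eq_pow_finrank, Nat.card_congr (Equiv.vaddConst (⟨γ₀, h₀⟩ : V))]

lemma setDim_le_of_subset {k : ℕ} {s : Set (Fin k → ZMod 2)}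
    {V : AffineSubspace (ZMod 2) (Fin k → ZMod 2)} (h : s ⊆ V) :
    setDim s ≤ Module.finrank (ZMod 2) V.direction :=
  Submodule.finrank_mono (AffineSubspace.direction_le (affineSpan_le.2 h))

lemma natCard_affineSpan_fourierSupport {k : ℕ} {f : (Fin k → ZMod 2) → ℝ}
    (hne : (fourierSupport f).Nonempty) :
    Nat.card (affineSpan (ZMod 2) (fourierSupport f)) = 2 ^ dimOf f := by
  obtain ⟨γ₀, hγ₀⟩ := hne
  rw [natCard_affineSubspace_eq_pow (subset_affineSpan _ _ hγ₀), Nat.card_zmod]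
  rfl

section Counting

lemma card_filter_exists_common_le_sum_sq {α β : Type*} [DecidableEq β] (r : α → β → Prop)
    [∀ a b, Decidable (r a b)] (s : Finset α) (t : Finset β) :
    #((t ×ˢ t).filter fun q => ∃ a ∈ s, r a q.1 ∧ r a q.2) ≤
      ∑ a ∈ s, #(t.bipartiteAbove r a) ^ 2 := calc
  _ ≤ #(s.biUnion fun a => t.bipartiteAbove r a ×ˢ t.bipartiteAbove r a) := by
    refine card_le_card fun q hq => ?_
    obtain ⟨⟨hq₁, hq₂⟩, a, ha, hr₁, hr₂⟩ := by simpa using hq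
    exact mem_biUnion.2 ⟨a, ha, by simp [bipartiteAbove, *]⟩
  _ ≤ ∑ a ∈ s, #(t.bipartiteAbove r a ×ˢ t.bipartiteAbove r a) := card_biUnion_le
  _ = ∑ a ∈ s, #(t.bipartiteAbove r a) ^ 2 := by simp [card_product, sq]

lemma sum_sq_eq_sq_sum_div_card {ι : Type*} {s : Finset ι} {g : ι → ℝ}
    (hg : ∀ i ∈ s, ∀ j ∈ s, g i = g j) : ∑ i ∈ s, g i ^ 2 = (∑ i ∈ s, g i) ^ 2 / #s := by
  rcases s.eq_empty_or_nonempty with rfl | hs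
  · simp
  obtain ⟨i, hi⟩ := hs
  rw [sum_congr rfl fun j hj => by rw [hg j hj i hi], sum_congr rfl fun j hj => hg j hj i hi,
    sum_const, sum_const, nsmul_eq_mul, nsmul_eq_mul]
  have : (#s : ℝ) ≠ 0 := by exact_mod_cast (card_pos.2 ⟨i, hi⟩).ne'
  field_simp

lemma card_filter_univ_eq_natCard {α : Type*} [Fintype α] (P : α → Prop) [DecidablePred P] :
    #(univ.filter P) = Nat.card {a // P a} := by
  rw [Nat.card_eq_fintype_card, Fintype.card_subtype]

end Counting

open scoped Classical in
lemma card_filter_notMem_affineSpan_fourierSupport {k : ℕ} {f : (Fin k → ZMod 2) → ℝ}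
    (hne : (fourierSupport f).Nonempty) :
    (#(univ.filter (· ∉ affineSpan (ZMod 2) (fourierSupport f))) : ℝ) = 2 ^ k - 2 ^ dimOf f := by
  have hcard := card_filter_add_card_filter_not (s := univ)
    (· ∈ affineSpan (ZMod 2) (fourierSupport f))
  rw [card_filter_univ_eq_natCard, natCard_affineSpan_fourierSupport hne, card_univ,
    Fintype.card_fun, ZMod.card, Fintype.card_fin] at hcard
  rw [eq_sub_iff_add_eq']
  exact_mod_cast hcard

namespace MParam

variable {k k' : ℕ}

def T (p : MParam k k') : (Fin k → ZMod 2) →ᵃ[ZMod 2] (Fin k' → ZMod 2) where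
  toFun x := x ᵥ* p.1.1 + p.1.2.2.1
  linear := vecMulLinear p.1.1
  map_vadd' x v := by simp [add_vecMul, add_assoc]

lemma T_apply (p : MParam k k') (x : Fin k → ZMod 2) : p.T x = x ᵥ* p.1.1 + p.1.2.2.1 := rfl

lemma affOf_eq_range (p : MParam k k') : affOf p = Set.range p.T := rfl

lemma T_injective (p : MParam k k') : Function.Injective p.T := by
  have hrows : LinearIndependent (ZMod 2) p.1.1.row := by
    rw [linearIndependent_iff_card_eq_finrank_span, Fintype.card_fin, Set.finrank,
      ← rank_eq_finrank_span_row, p.2]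
  exact (add_left_injective _).comp (vecMul_injective_iff.2 hrows)

lemma natCard_affOf (p : MParam k k') : Nat.card (affOf p) = 2 ^ k := by
  rw [affOf_eq_range, Nat.card_range_of_injective p.T_injective]
  simp

lemma coe_map_top_T (p : MParam k k') :
    ((⊤ : AffineSubspace (ZMod 2) _).map p.T : Set _) = affOf p := by
  simp [AffineSubspace.coe_map, affOf_eq_range]

lemma ext_of_T {p q : MParam k k'} (hT : ∀ x, p.T x = q.T x) (hb : p.1.2.1 = q.1.2.1)
    (hc : p.1.2.2.2 = q.1.2.2.2) : p = q := by
  have hβ : p.1.2.2.1 = q.1.2.2.1 := by simpa [T_apply] using hT 0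
  have hA : p.1.1 = q.1.1 := by
    ext i j
    simpa [T_apply, hβ, single_vecMul] using congrFun (hT (Pi.single i 1)) j
  exact Subtype.ext (Prod.ext hA (Prod.ext hb (Prod.ext hβ hc)))

section Fourier

lemma fhat_applyR (p : MParam k k') (f : (Fin k → ZMod 2) → ℝ) (γ : Fin k' → ZMod 2) :
    fhat (p.applyR f) γ =
      ∑ α, if p.T α = γ then fhat f α * chi α p.1.2.1 * (-1) ^ p.1.2.2.2.val else 0 := by
  have hexpand : ∀ y, chi γ y * p.applyR f y = ∑ α,
      fhat f α * chi α p.1.2.1 * (-1) ^ p.1.2.2.2.val * chi (γ + p.T α) y := fun y => by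
    rw [applyR, ← fhat_inversion f, Finset.sum_mul, Finset.sum_mul, Finset.mul_sum]
    refine Finset.sum_congr rfl fun α _ => ?_
    rw [chi_add_right, chi_mulVec, T_apply, chi_add_left, chi_add_left]
    ring
  rw [fhat]
  simp only [hexpand]
  rw [Finset.sum_comm, Finset.mul_sum]
  refine Finset.sum_congr rfl fun α _ => ?_
  simp only [← Finset.mul_sum, sum_chi, add_eq_zero_iff_eq_of_zmod_two, eq_comm (a := γ)]
  split_ifs
  · field_simp
  · simp

lemma fhat_applyR_T (p : MParam k k') (f : (Fin k → ZMod 2) → ℝ) (α : Fin k → ZMod 2) :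
    fhat (p.applyR f) (p.T α) = fhat f α * chi α p.1.2.1 * (-1) ^ p.1.2.2.2.val := by
  rw [fhat_applyR, Finset.sum_eq_single α (fun β _ hβ => if_neg (hβ ∘ (p.T_injective ·)))
    (by simp), if_pos rfl]

lemma fhat_applyR_eq_zero_of_notMem {p : MParam k k'} {γ : Fin k' → ZMod 2} (hγ : γ ∉ affOf p)
    (f : (Fin k → ZMod 2) → ℝ) : fhat (p.applyR f) γ = 0 := by
  rw [fhat_applyR]
  exact Finset.sum_eq_zero fun α _ => if_neg fun h => hγ ⟨α, h⟩

lemma fourierSupport_applyR (p : MParam k k') (f : (Fin k → ZMod 2) → ℝ) :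
    fourierSupport (p.applyR f) = p.T '' fourierSupport f := by
  ext γ
  by_cases hγ : γ ∈ affOf p
  · obtain ⟨α, rfl⟩ : γ ∈ Set.range p.T := hγ
    rw [p.T_injective.mem_set_image]
    simp [fourierSupport, fhat_applyR_T, chi_ne_zero]
  · simp only [fourierSupport, Set.mem_ofPred_eq, fhat_applyR_eq_zero_of_notMem hγ]
    exact iff_of_false (not_not_intro rfl) fun ⟨α, _, h⟩ => hγ ⟨α, h⟩

lemma affineSpan_fourierSupport_applyR_subset (p : MParam k k') (f : (Fin k → ZMod 2) → ℝ) :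
    (affineSpan (ZMod 2) (fourierSupport (p.applyR f)) : Set _) ⊆ affOf p := by
  rw [← coe_map_top_T]
  refine SetLike.coe_subset_coe.2 (affineSpan_le.2 ?_)
  rw [coe_map_top_T, fourierSupport_applyR, affOf_eq_range]
  exact Set.image_subset_range _ _

end Fourier

section Transport

def transport (p : MParam k k') (g : (Fin k' → ZMod 2) ≃ᵃ[ZMod 2] (Fin k' → ZMod 2)) :
    MParam k k' :=
  ⟨(p.1.1 * (LinearMap.toMatrix' (g.linear : (Fin k' → ZMod 2) →ₗ[ZMod 2] _))ᵀ, p.1.2.1,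
      g p.1.2.2.1, p.1.2.2.2), by
    rw [rank_mul_eq_left_of_isUnit_det]
    · exact p.2
    · rw [det_transpose, LinearMap.det_toMatrix']
      exact g.linear.isUnit_det'⟩

variable (p : MParam k k') (g : (Fin k' → ZMod 2) ≃ᵃ[ZMod 2] (Fin k' → ZMod 2))

lemma T_transport (x : Fin k → ZMod 2) : (p.transport g).T x = g (p.T x) := by
  rw [T_apply, T_apply, ← vadd_eq_add (x ᵥ* p.1.1), g.map_vadd]
  simp [transport, ← vecMul_vecMul, vecMul_transpose]

lemma affOf_transport : affOf (p.transport g) = g '' affOf p := by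
  rw [affOf_eq_range, affOf_eq_range, ← Set.range_comp]
  exact congrArg Set.range (funext (T_transport p g))

lemma transport_transport_symm : (p.transport g).transport g.symm = p :=
  ext_of_T (fun x => by simp [T_transport]) rfl rfl

lemma applyR_transport (f : (Fin k → ZMod 2) → ℝ)
    (hg : ∀ γ ∈ fourierSupport (p.applyR f), g γ = γ) :
    (p.transport g).applyR f = p.applyR f := by
  refine fhat_injective (funext fun γ => ?_)
  rw [fhat_applyR, fhat_applyR]
  refine Finset.sum_congr rfl fun α _ => ?_
  by_cases hα : fhat f α = 0
  · simp [hα]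
  · rw [T_transport, hg _ (by rw [fourierSupport_applyR]; exact ⟨α, hα, rfl⟩)]
    rfl

end Transport

section Counting

instance : Finite (MParam k k') := Subtype.finite

noncomputable instance : Fintype (MParam k k') := Fintype.ofFinite _

open scoped Classical in
noncomputable def lifts (f : (Fin k → ZMod 2) → ℝ) (f' : (Fin k' → ZMod 2) → ℝ) :
    Finset (MParam k k') :=
  univ.filter fun p => p.applyR f = f'

open scoped Classical in
noncomputable def liftsThrough (f : (Fin k → ZMod 2) → ℝ) (f' : (Fin k' → ZMod 2) → ℝ)
    (γ : Fin k' → ZMod 2) : Finset (MParam k k') :=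
  (lifts f f').filter (γ ∈ affOf ·)

variable {f : (Fin k → ZMod 2) → ℝ} {f' : (Fin k' → ZMod 2) → ℝ}

lemma mem_lifts {p : MParam k k'} : p ∈ lifts f f' ↔ p.applyR f = f' := by
  simp [lifts]

lemma natCard_eq_card_lifts : Nat.card {p : MParam k k' // p.applyR f = f'} = #(lifts f f') := by
  rw [lifts, card_filter_univ_eq_natCard]

lemma mem_liftsThrough {p : MParam k k'} {γ : Fin k' → ZMod 2} :
    p ∈ liftsThrough f f' γ ↔ p.applyR f = f' ∧ γ ∈ affOf p := by
  simp [liftsThrough, mem_lifts]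

lemma transport_mem_liftsThrough {g : (Fin k' → ZMod 2) ≃ᵃ[ZMod 2] (Fin k' → ZMod 2)}
    (hg : ∀ γ ∈ affineSpan (ZMod 2) (fourierSupport f'), g γ = γ) {p : MParam k k'}
    {γ : Fin k' → ZMod 2} (hp : p ∈ liftsThrough f f' γ) :
    p.transport g ∈ liftsThrough f f' (g γ) := by
  obtain ⟨hp, hγ⟩ := mem_liftsThrough.1 hp
  refine mem_liftsThrough.2 ⟨?_, by rw [affOf_transport]; exact Set.mem_image_of_mem g hγ⟩
  rw [applyR_transport p g f fun γ hγ => hg γ (subset_affineSpan _ _ (hp ▸ hγ)), hp]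

lemma card_liftsThrough_eq (hne : (fourierSupport f').Nonempty) {γ₁ γ₂ : Fin k' → ZMod 2}
    (h₁ : γ₁ ∉ affineSpan (ZMod 2) (fourierSupport f'))
    (h₂ : γ₂ ∉ affineSpan (ZMod 2) (fourierSupport f')) :
    #(liftsThrough f f' γ₁) = #(liftsThrough f f' γ₂) := by
  obtain ⟨γ₀, hγ₀⟩ := hne
  obtain ⟨g, hgV, hg⟩ := exists_affineEquiv_fix_of_notMem (subset_affineSpan _ _ hγ₀) h₁ h₂
  have hgV' : ∀ γ ∈ affineSpan (ZMod 2) (fourierSupport f'), g.symm γ = γ :=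
    fun γ hγ => g.symm_apply_eq.2 (hgV γ hγ).symm
  refine card_nbij' (·.transport g) (·.transport g.symm) (fun p hp => ?_) (fun p hp => ?_)
    (fun p _ => transport_transport_symm p g) (fun p _ => transport_transport_symm p g.symm)
  · simpa [hg] using transport_mem_liftsThrough hgV hp
  · simpa [g.symm_apply_eq.2 hg.symm] using transport_mem_liftsThrough hgV' hp

open scoped Classical in
lemma card_affOf_diff_affineSpan (hne : (fourierSupport f').Nonempty) {p : MParam k k'}
    (hp : p.applyR f = f') :
    (#((univ.filter (· ∉ affineSpan (ZMod 2) (fourierSupport f'))).filter (· ∈ affOf p)) : ℝ) =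
      2 ^ k - 2 ^ dimOf f' := by
  have hV := p.affineSpan_fourierSupport_applyR_subset f
  rw [hp] at hV
  set V := affineSpan (ZMod 2) (fourierSupport f')
  have hsub : univ.filter (· ∈ V) ⊆ univ.filter (· ∈ affOf p) :=
    monotone_filter_right _ fun _ _ hγ => hV hγ
  have hdiff : (univ.filter (· ∉ V)).filter (· ∈ affOf p) =
      univ.filter (· ∈ affOf p) \ univ.filter (· ∈ V) := by
    ext γ
    simp only [mem_filter, mem_univ, true_and, mem_sdiff]
    tauto
  rw [hdiff, card_sdiff_of_subset hsub, Nat.cast_sub (card_le_card hsub),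
    card_filter_univ_eq_natCard, card_filter_univ_eq_natCard, p.natCard_affOf,
    natCard_affineSpan_fourierSupport hne]
  push_cast
  rfl

open scoped Classical in
lemma sum_card_liftsThrough (hne : (fourierSupport f').Nonempty) :
    ∑ γ ∈ univ.filter (· ∉ affineSpan (ZMod 2) (fourierSupport f')),
        (#(liftsThrough f f' γ) : ℝ) = #(lifts f f') * (2 ^ k - 2 ^ dimOf f') := by
  calc _ = ∑ p ∈ lifts f f',
        (#((univ.filter (· ∉ affineSpan (ZMod 2) (fourierSupport f'))).filter (· ∈ affOf p)) : ℝ) :=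
      mod_cast sum_card_bipartiteAbove_eq_sum_card_bipartiteBelow (fun γ p => γ ∈ affOf p)
    _ = _ := by
      rw [sum_congr rfl fun p hp => card_affOf_diff_affineSpan hne (mem_lifts.1 hp), sum_const,
        nsmul_eq_mul]

open scoped Classical in
lemma natCard_overlapping_le_sum_sq :
    Nat.card {q : MParam k k' × MParam k k' //
        q.1.applyR f = f' ∧ q.2.applyR f = f' ∧ dimOf f' < setDim (affOf q.1 ∩ affOf q.2)} ≤
      ∑ γ ∈ univ.filter (· ∉ affineSpan (ZMod 2) (fourierSupport f')),
        #(liftsThrough f f' γ) ^ 2 := by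
  rw [← card_filter_univ_eq_natCard]
  refine (card_le_card fun q hq => ?_).trans
    (card_filter_exists_common_le_sum_sq (fun γ p => γ ∈ affOf p) _ (lifts f f'))
  obtain ⟨h₁, h₂, hdim⟩ := by simpa using hq
  -- otherwise `affine(M₁) ∩ affine(M₂)` would lie in a span of dimension `dim f'`
  obtain ⟨γ, hγ, hγV⟩ := Set.not_subset.1 fun h => (setDim_le_of_subset h).not_gt hdim
  simpa [mem_lifts, h₁, h₂] using ⟨γ, hγV, hγ⟩

end Counting

end MParam

theorem count_overlapping_lift_pairs_general {k k' d : ℕ}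
    (f : (Fin k → ZMod 2) → ℝ) (f' : (Fin k' → ZMod 2) → ℝ)
    (hf' : ∀ x, f' x = 1 ∨ f' x = -1)
    (hdf' : dimOf f' = d) :
    (Nat.card {q : MParam k k' × MParam k k' //
        q.1.applyR f = f' ∧ q.2.applyR f = f' ∧ d < setDim (affOf q.1 ∩ affOf q.2)} : ℝ)
      ≤ (Nat.card {p : MParam k k' // p.applyR f = f'} : ℝ) ^ 2 *
          ((2 ^ k : ℝ) - 2 ^ d) ^ 2 / ((2 ^ k' : ℝ) - 2 ^ d) := by
  classical
  subst hdf'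
  have hne := fourierSupport_nonempty hf'
  set B := univ.filter (· ∉ affineSpan (ZMod 2) (fourierSupport f'))
  set n : (Fin k' → ZMod 2) → ℝ := fun γ => #(MParam.liftsThrough f f' γ)
  have hconst : ∀ γ₁ ∈ B, ∀ γ₂ ∈ B, n γ₁ = n γ₂ := fun γ₁ h₁ γ₂ h₂ => by
    simp only [B, mem_filter, mem_univ, true_and] at h₁ h₂
    simp only [n, MParam.card_liftsThrough_eq hne h₁ h₂]
  have hpairs := MParam.natCard_overlapping_le_sum_sq (f := f) (f' := f')
  calc _ ≤ ∑ γ ∈ B, n γ ^ 2 := by simp only [n]; exact_mod_cast hpairs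
    _ = (∑ γ ∈ B, n γ) ^ 2 / #B := sum_sq_eq_sq_sum_div_card hconst
    _ = _ := by
      rw [MParam.sum_card_liftsThrough hne, card_filter_notMem_affineSpan_fourierSupport hne,
        MParam.natCard_eq_card_lifts]
      ring

/-- For Boolean functions `f ∈ F_k`, `f' ∈ F_{k'}` with `dim(f) = dim(f') = d`, the number of
pairs `(M₁, M₂)` of affine lifts taking `f` to `f'` with
`dim(affine(M₁) ∩ affine(M₂)) > d` is at most `|N_{f→f'}|² (2^k − 2^d)² / (2^{k'} − 2^d)`. -/
theorem count_overlapping_lift_pairs {k k' d : ℕ} (hkk : k ≤ k')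
    (f : (Fin k → ZMod 2) → ℝ) (f' : (Fin k' → ZMod 2) → ℝ)
    (hf : ∀ x, f x = 1 ∨ f x = -1) (hf' : ∀ x, f' x = 1 ∨ f' x = -1)
    (hdf : dimOf f = d) (hdf' : dimOf f' = d) :
    (Nat.card {q : MParam k k' × MParam k k' //
        q.1.applyR f = f' ∧ q.2.applyR f = f' ∧ d < setDim (affOf q.1 ∩ affOf q.2)} : ℝ)
      ≤ (Nat.card {p : MParam k k' // p.applyR f = f'} : ℝ) ^ 2 *
          ((2 ^ k : ℝ) - 2 ^ d) ^ 2 / ((2 ^ k' : ℝ) - 2 ^ d) :=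
  count_overlapping_lift_pairs_general f f' hf' hdf'
end
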